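/- arXiv:2210.06156 — 3 statements merged into one kernel-verified Lean document; each statement's English description precedes it below -/
import Mathlib

section
/- Let M be the symmetric 4×4 real matrix M = !![0,0,0,0; 0, 4ab²+2a²b², 2a²b²-4ab³, -2a²b²; 0, 2a²b²-4ab³, 4ab²+2a²b², -2a²b²; 0, -2a²b², -2a²b², 2b²+2b⁴] where a, b > 0 and a + b = 1. Then M is positive semidefinite, 0 is a simple eigenvalue of M whose kernel contains e₁, and the second-smallest eigenvalue of M is strictly positive. -/
theorem M_star_psd_kernel_and_gap
    (a b : ℝ) (ha : 0 < a) (hb : 0 < b) (hab : a + b = 1) :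
    let M : Matrix (Fin 4) (Fin 4) ℝ :=
      !![0, 0, 0, 0;
         0, 4*a*b^2 + 2*a^2*b^2, 2*a^2*b^2 - 4*a*b^3, -2*a^2*b^2;
         0, 2*a^2*b^2 - 4*a*b^3, 4*a*b^2 + 2*a^2*b^2, -2*a^2*b^2;
         0, -2*a^2*b^2, -2*a^2*b^2, 2*b^2 + 2*b^4]
    M.PosSemidef ∧
    M.mulVec (Pi.single 0 1) = 0 ∧
    ∃ ρ : ℝ, 0 < ρ ∧ ∀ x : Fin 4 → ℝ, x 0 = 0 →
      ρ * (∑ i, x i ^ 2) ≤ dotProduct x (M.mulVec x) := by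
  intro M
  have hb1 : b < 1 := by linarith
  have ha1 : a < 1 := by linarith
  have hba : b = 1 - a := by linarith
  refine ⟨Matrix.PosSemidef.of_dotProduct_mulVec_nonneg ?_ ?_, ?_, ?_⟩
  · ext i j
    fin_cases i <;> fin_cases j <;>
      simp [M, Matrix.conjTranspose_apply, Matrix.vecHead, Matrix.vecTail]
  · intro x
    have h : dotProduct (star x) (M.mulVec x) =
        (4*a*b^2 + 2*a^2*b^2) * (x 1 ^ 2 + x 2 ^ 2) + 2*(2*a^2*b^2 - 4*a*b^3) * (x 1 * x 2)
        - 4*a^2*b^2 * (x 3 * (x 1 + x 2)) + (2*b^2 + 2*b^4) * x 3 ^ 2 := by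
      simp [M, dotProduct, Matrix.mulVec, Fin.sum_univ_four]
      ring
    rw [h, hba]
    have h1 : 0 ≤ 4*a*(1-a)^3 * (x 1 - x 2)^2 := by
      have : (0:ℝ) ≤ 4*a*(1-a)^3 := by nlinarith [pow_pos (show (0:ℝ) < 1-a by linarith) 3]
      exact mul_nonneg this (sq_nonneg _)
    have h2 : 0 ≤ 4*a^2*(1-a)^2 * (x 1 ^2 + x 2 ^2) := by positivity
    have h3 : 0 ≤ 2*a^2*(1-a)^2 * (x 1 + x 2 - x 3)^2 := by positivity
    have h4 : 0 ≤ 4*(1-a)^3 * x 3 ^2 := by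
      have : (0:ℝ) ≤ 4*(1-a)^3 := by nlinarith [pow_pos (show (0:ℝ) < 1-a by linarith) 3]
      exact mul_nonneg this (sq_nonneg _)
    linarith [h1, h2, h3, h4]
  · ext i
    fin_cases i <;>
      simp [M, Matrix.mulVec, dotProduct, Fin.sum_univ_four, Pi.single_apply]
  · refine ⟨2*a^2*b^3, by positivity, ?_⟩
    intro x hx0
    have h : dotProduct x (M.mulVec x) =
        (4*a*b^2 + 2*a^2*b^2) * (x 1 ^ 2 + x 2 ^ 2) + 2*(2*a^2*b^2 - 4*a*b^3) * (x 1 * x 2)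
        - 4*a^2*b^2 * (x 3 * (x 1 + x 2)) + (2*b^2 + 2*b^4) * x 3 ^ 2 := by
      simp [M, dotProduct, Matrix.mulVec, Fin.sum_univ_four]
      ring
    rw [h, Fin.sum_univ_four, hx0, hba]
    have hc : (0:ℝ) < 1 - a := by linarith
    have h1 : 0 ≤ 4*a*(1-a)^3 * (x 1 - x 2)^2 := by
      have : (0:ℝ) ≤ 4*a*(1-a)^3 := by positivity
      exact mul_nonneg this (sq_nonneg _)
    have h2 : 0 ≤ (2*a^2*(1-a)^2*(1+a)) * (x 1 ^2 + x 2 ^2) := by positivity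
    have h3 : 0 ≤ 2*a^2*(1-a)^2 * (x 1 + x 2 - x 3)^2 := by positivity
    have h4 : 0 ≤ (2*(1-a)^3*(2-a^2)) * x 3 ^2 := by
      have h5 : (0:ℝ) ≤ 2*(1-a)^3*(2-a^2) := by
        have : (0:ℝ) < 2 - a^2 := by nlinarith
        positivity
      exact mul_nonneg h5 (sq_nonneg _)
    linarith [h1, h2, h3, h4]
end

section
/- Let Λ : [0,T] → ℝ be twice continuously differentiable with Λ''(t) ≥ ρ(T−t)·Λ'(t) for all t ∈ [0,T], where ρ : [0,T] → ℝ is continuous. Then Λ(T) − Λ(0) ≤ Λ'(T) · ∫₀ᵀ exp(−∫ₜᵀ ρ(T−s) ds) dt. -/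
theorem gronwall_type_integrated_bound
    (T : ℝ) (hT : 0 < T)
    (ρ : ℝ → ℝ) (hρ : ContinuousOn ρ (Set.Icc 0 T))
    (Λ Λ' Λ'' : ℝ → ℝ)
    (hΛ' : ∀ t ∈ Set.Icc 0 T, HasDerivAt Λ (Λ' t) t)
    (hΛ'' : ∀ t ∈ Set.Icc 0 T, HasDerivAt Λ' (Λ'' t) t)
    (hcont : ContinuousOn Λ'' (Set.Icc 0 T))
    (hineq : ∀ t ∈ Set.Icc 0 T, ρ (T - t) * Λ' t ≤ Λ'' t) :
    Λ T - Λ 0 ≤ Λ' T * ∫ t in (0:ℝ)..T, Real.exp (-∫ s in t..T, ρ (T - s)) := by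
  -- continuous extension of ρ
  set ρe : ℝ → ℝ := Set.IccExtend hT.le ((Set.Icc 0 T).restrict ρ) with hρe
  have hρe_cont : Continuous ρe := (continuousOn_iff_continuous_restrict.1 hρ).Icc_extend'
  have hρe_eq : ∀ x ∈ Set.Icc 0 T, ρe x = ρ x := fun x hx => Set.IccExtend_of_mem hT.le _ hx
  set q : ℝ → ℝ := fun s => ρe (T - s) with hq
  have hq_cont : Continuous q := hρe_cont.comp (continuous_const.sub continuous_id)
  have hq_eq : ∀ s ∈ Set.Icc 0 T, q s = ρ (T - s) := by
    intro s hs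
    exact hρe_eq _ ⟨by linarith [hs.2], by linarith [hs.1]⟩
  set F : ℝ → ℝ := fun t => ∫ s in (0:ℝ)..t, q s with hF
  have hFd : ∀ t : ℝ, HasDerivAt F (q t) t := fun t =>
    intervalIntegral.integral_hasDerivAt_right (hq_cont.intervalIntegrable _ _)
      hq_cont.aestronglyMeasurable.stronglyMeasurableAtFilter hq_cont.continuousAt
  have hF_cont : Continuous F := continuous_iff_continuousAt.2 fun t => (hFd t).continuousAt
  -- h = Λ' * exp(-F) is monotone on [0,T]
  set h : ℝ → ℝ := fun t => Λ' t * Real.exp (-F t) with hh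
  have hhd : ∀ t ∈ Set.Icc 0 T,
      HasDerivAt h ((Λ'' t - q t * Λ' t) * Real.exp (-F t)) t := by
    intro t ht
    have h1 : HasDerivAt (fun t => Real.exp (-F t)) (-q t * Real.exp (-F t)) t := by
      have := (Real.hasDerivAt_exp (-F t)).comp t ((hFd t).neg)
      simpa [mul_comm, Function.comp_def] using this
    have : HasDerivAt (fun y => Λ' y * Real.exp (-F y))
        (Λ'' t * Real.exp (-F t) + Λ' t * (-q t * Real.exp (-F t))) t := (hΛ'' t ht).mul h1
    convert this using 1
    ring
  have hΛ'_cont : ContinuousOn Λ' (Set.Icc 0 T) :=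
    fun t ht => ((hΛ'' t ht).continuousAt).continuousWithinAt
  have hh_cont : ContinuousOn h (Set.Icc 0 T) :=
    fun t ht => ((hhd t ht).continuousAt).continuousWithinAt
  have hmono : MonotoneOn h (Set.Icc 0 T) := by
    apply monotoneOn_of_hasDerivWithinAt_nonneg (convex_Icc 0 T) hh_cont
    · intro x hx
      rw [interior_Icc] at hx
      exact ((hhd x (Set.mem_Icc_of_Ioo hx)).hasDerivWithinAt)
    · intro x hx
      rw [interior_Icc] at hx
      have hx' := Set.mem_Icc_of_Ioo hx
      have : q x * Λ' x ≤ Λ'' x := by rw [hq_eq x hx']; exact hineq x hx'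
      exact mul_nonneg (by linarith) (Real.exp_pos _).le
  -- pointwise bound Λ' t ≤ Λ' T * exp (F t - F T)
  have key : ∀ t ∈ Set.Icc 0 T, Λ' t ≤ Λ' T * Real.exp (-(F T - F t)) := by
    intro t ht
    have := hmono ht (Set.right_mem_Icc.2 hT.le) ht.2
    have hpos : (0:ℝ) < Real.exp (-F t) := Real.exp_pos _
    rw [hh] at this
    calc Λ' t = (Λ' t * Real.exp (-F t)) * Real.exp (F t) := by
              rw [mul_assoc, ← Real.exp_add]; simp
      _ ≤ (Λ' T * Real.exp (-F T)) * Real.exp (F t) :=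
              mul_le_mul_of_nonneg_right this (Real.exp_pos _).le
      _ = Λ' T * Real.exp (-(F T - F t)) := by
              rw [mul_assoc, ← Real.exp_add]; ring_nf
  -- rewrite inner integrals
  have hFTt : ∀ t ∈ Set.Icc 0 T, (∫ s in t..T, ρ (T - s)) = F T - F t := by
    intro t ht
    rw [hF]
    rw [intervalIntegral.integral_interval_sub_left (hq_cont.intervalIntegrable _ _)
      (hq_cont.intervalIntegrable _ _)]
    apply intervalIntegral.integral_congr
    intro s hs
    rw [Set.uIcc_of_le ht.2] at hs
    exact (hq_eq s ⟨le_trans ht.1 hs.1, hs.2⟩).symm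
  -- FTC for Λ
  have hΛeq : Λ T - Λ 0 = ∫ t in (0:ℝ)..T, Λ' t := by
    refine (intervalIntegral.integral_eq_sub_of_hasDerivAt (fun t ht => ?_) ?_).symm
    · exact hΛ' t (by rwa [Set.uIcc_of_le hT.le] at ht)
    · rw [intervalIntegrable_iff_integrableOn_Icc_of_le hT.le]
      exact hΛ'_cont.integrableOn_compact isCompact_Icc
  have hGcont : Continuous fun t => Λ' T * Real.exp (-(F T - F t)) := by
    continuity
  have hstep : (∫ t in (0:ℝ)..T, Λ' t) ≤
      ∫ t in (0:ℝ)..T, Λ' T * Real.exp (-(F T - F t)) := by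
    apply intervalIntegral.integral_mono_on hT.le ?_ (hGcont.intervalIntegrable _ _) key
    rw [intervalIntegrable_iff_integrableOn_Icc_of_le hT.le]
    exact hΛ'_cont.integrableOn_compact isCompact_Icc
  have hrw : (∫ t in (0:ℝ)..T, Real.exp (-∫ s in t..T, ρ (T - s)))
      = ∫ t in (0:ℝ)..T, Real.exp (-(F T - F t)) := by
    apply intervalIntegral.integral_congr
    intro t ht
    rw [Set.uIcc_of_le hT.le] at ht
    simp only []
    rw [hFTt t ht]
  rw [hΛeq, hrw, ← intervalIntegral.integral_const_mul]
  exact hstep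
end

section
/- Let B(k), k ≥ 0, be the 4×4 matrices B(k) = !![u_k², u_k v_k, u_k v_k, v_k²; u_k v_k, u_k², v_k², u_k v_k; u_k v_k, v_k², u_k², u_k v_k; v_k², u_k v_k, u_k v_k, u_k²] with u_k + v_k = 1, and let w_k ≥ 0 with Σ w_k = W > 0 (finite sum over k = 0,…,N). Then det(Σ_k w_k B(k)) = W · (Σ_k w_k (u_k − v_k)²) · (Σ_k w_k (u_k − v_k))². In particular, if u_k − v_k > 0 for all k and some w_k > 0, the matrix Σ_k w_k B(k) is invertible. -/
theorem weighted_sum_B_det_formula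
    (N : ℕ) (u v w : ℕ → ℝ)
    (huv : ∀ k, u k + v k = 1)
    (hw : ∀ k, 0 ≤ w k)
    (hW : 0 < ∑ k ∈ Finset.range (N + 1), w k) :
    let B : ℕ → Matrix (Fin 4) (Fin 4) ℝ := fun k =>
      !![u k ^ 2, u k * v k, u k * v k, v k ^ 2;
         u k * v k, u k ^ 2, v k ^ 2, u k * v k;
         u k * v k, v k ^ 2, u k ^ 2, u k * v k;
         v k ^ 2, u k * v k, u k * v k, u k ^ 2]
    (∑ k ∈ Finset.range (N + 1), w k • B k).det =
      (∑ k ∈ Finset.range (N + 1), w k) *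
      (∑ k ∈ Finset.range (N + 1), w k * (u k - v k) ^ 2) *
      (∑ k ∈ Finset.range (N + 1), w k * (u k - v k)) ^ 2 ∧
    ((∀ k ∈ Finset.range (N + 1), 0 < u k - v k) →
      IsUnit (∑ k ∈ Finset.range (N + 1), w k • B k)) := by
  intro B
  set s := Finset.range (N + 1) with hs
  set a := ∑ k ∈ s, w k * u k ^ 2 with ha
  set b := ∑ k ∈ s, w k * (u k * v k) with hb
  set c := ∑ k ∈ s, w k * v k ^ 2 with hc
  have hsum : (∑ k ∈ s, w k • B k) = !![a, b, b, c; b, a, c, b; b, c, a, b; c, b, b, a] := by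
    ext i j
    rw [Matrix.sum_apply]
    fin_cases i <;> fin_cases j <;>
      simp [B, Matrix.smul_apply, ha, hb, hc]
  have hdet : (∑ k ∈ s, w k • B k).det = (a + 2*b + c) * (a - 2*b + c) * (a - c) ^ 2 := by
    rw [hsum]
    simp [Matrix.det_succ_row_zero, Fin.sum_univ_succ, Fin.succAbove]
    ring
  have hW' : (∑ k ∈ s, w k) = a + 2*b + c := by
    rw [ha, hb, hc]
    rw [show (∑ k ∈ s, w k * u k ^ 2) + 2 * ∑ k ∈ s, w k * (u k * v k) + ∑ k ∈ s, w k * v k ^ 2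
        = ∑ k ∈ s, (w k * u k ^ 2 + 2 * (w k * (u k * v k)) + w k * v k ^ 2) by
      rw [Finset.mul_sum, ← Finset.sum_add_distrib, ← Finset.sum_add_distrib]]
    refine Finset.sum_congr rfl fun k _ => ?_
    linear_combination (-(w k) * (1 + u k + v k)) * huv k
  have h2 : (∑ k ∈ s, w k * (u k - v k) ^ 2) = a - 2*b + c := by
    rw [ha, hb, hc]
    rw [show (∑ k ∈ s, w k * u k ^ 2) - 2 * (∑ k ∈ s, w k * (u k * v k)) + ∑ k ∈ s, w k * v k ^ 2
        = ∑ k ∈ s, (w k * u k ^ 2 - 2 * (w k * (u k * v k)) + w k * v k ^ 2) by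
      rw [Finset.mul_sum, ← Finset.sum_sub_distrib, ← Finset.sum_add_distrib]]
    refine Finset.sum_congr rfl fun k _ => ?_
    ring
  have h3 : (∑ k ∈ s, w k * (u k - v k)) = a - c := by
    rw [ha, hc, ← Finset.sum_sub_distrib]
    refine Finset.sum_congr rfl fun k _ => ?_
    linear_combination (-(w k) * (u k - v k)) * huv k
  constructor
  · rw [hdet, hW', h2, h3]
  · intro hpos
    rw [Matrix.isUnit_iff_isUnit_det, isUnit_iff_ne_zero, hdet, ← hW', ← h2, ← h3]
    have hwex : ∃ k ∈ s, 0 < w k := by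
      by_contra h
      push_neg at h
      have : (∑ k ∈ s, w k) ≤ 0 := Finset.sum_nonpos fun k hk => h k hk
      linarith
    obtain ⟨k₀, hk₀, hwk₀⟩ := hwex
    have hp2 : 0 < ∑ k ∈ s, w k * (u k - v k) ^ 2 := by
      refine Finset.sum_pos' (fun k hk => mul_nonneg (hw k) (sq_nonneg _)) ⟨k₀, hk₀, ?_⟩
      exact mul_pos hwk₀ (pow_pos (hpos k₀ hk₀) 2)
    have hp3 : 0 < ∑ k ∈ s, w k * (u k - v k) := by
      refine Finset.sum_pos' (fun k hk => mul_nonneg (hw k) (le_of_lt (hpos k hk)))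
        ⟨k₀, hk₀, mul_pos hwk₀ (hpos k₀ hk₀)⟩
    exact ne_of_gt (mul_pos (mul_pos hW hp2) (pow_pos hp3 2))
end
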